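/- arXiv:1206.0281 — 2 statements merged into one kernel-verified Lean document; each statement's English description precedes it below -/
import Mathlib

section
/- Let ω ∈ ℝ^n be the weight vector of the interpolatory rule Q_n and let d ≥ n−1 be an integer. Then Q_n has degree of exactness d if and only if μ_j = ∫_a^b q_j(t) w(t) dt = 0 for all j with n ≤ j ≤ d and μ_{d+1} = ∫_a^b q_{d+1}(t) w(t) dt ≠ 0. -/
open Polynomial MeasureTheory

/-- The canonical basis polynomials and their extension (Definition 2.1):
`phi n t 0 = 1`, `phi n t (j+1) = phi n t j * (X - C (t (j % n)))`.
With 0-based node indexing `t 0, …, t (n-1)`, for `0 ≤ j ≤ n - 1` this is the canonical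
basis `φ_j`, while for `j ≥ n` it is the extension `q_j(x) = q_{j-1}(x)(x - t_r)`,
`r ≡ j (mod n)`. -/
noncomputable def phi (n : ℕ) (t : ℕ → ℝ) : ℕ → Polynomial ℝ
  | 0 => 1
  | j + 1 => phi n t j * (Polynomial.X - Polynomial.C (t (j % n)))

/-- The moments `μ_j = ∫_a^b φ_j(x) w(x) dx` (for `j ≥ n` this is `∫_a^b q_j(x) w(x) dx`). -/
noncomputable def mu (n : ℕ) (t : ℕ → ℝ) (a b : ℝ) (w : ℝ → ℝ) (j : ℕ) : ℝ :=
  ∫ x in a..b, (phi n t j).eval x * w x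

/-- The quadrature rule `Q_n(f) = ∑_{i=1}^n ω_i f(t_i)`. -/
def Qn (n : ℕ) (t : ℕ → ℝ) (ω : Fin n → ℝ) (f : ℝ → ℝ) : ℝ :=
  ∑ i : Fin n, ω i * f (t i)

/-- The rule with weights `ω` is interpolatory: exact for all polynomials of degree ≤ n-1. -/
def Interpolatory (n : ℕ) (t : ℕ → ℝ) (a b : ℝ) (w : ℝ → ℝ) (ω : Fin n → ℝ) : Prop :=
  ∀ p : Polynomial ℝ, p.natDegree ≤ n - 1 →
    Qn n t ω (fun x => p.eval x) = ∫ x in a..b, p.eval x * w x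

/-- The rule with weights `ω` has degree of exactness `d`: it is exact for all
polynomials of degree ≤ d, but not exact for all polynomials of degree d+1. -/
def HasDegreeOfExactness (n : ℕ) (t : ℕ → ℝ) (a b : ℝ) (w : ℝ → ℝ) (ω : Fin n → ℝ)
    (d : ℕ) : Prop :=
  (∀ p : Polynomial ℝ, p.natDegree ≤ d →
      Qn n t ω (fun x => p.eval x) = ∫ x in a..b, p.eval x * w x) ∧
  ∃ p : Polynomial ℝ, p.natDegree ≤ d + 1 ∧
      Qn n t ω (fun x => p.eval x) ≠ ∫ x in a..b, p.eval x * w x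


lemma phi_monic (n : ℕ) (t : ℕ → ℝ) : ∀ j, (phi n t j).Monic
  | 0 => monic_one
  | j + 1 => (phi_monic n t j).mul (monic_X_sub_C _)

lemma phi_natDegree (n : ℕ) (t : ℕ → ℝ) : ∀ j, (phi n t j).natDegree = j
  | 0 => natDegree_one
  | j + 1 => by
    rw [phi, (phi_monic n t j).natDegree_mul (monic_X_sub_C _), phi_natDegree n t j,
      natDegree_X_sub_C]

lemma phi_dvd (n : ℕ) (t : ℕ → ℝ) : ∀ j k, k < j → (X - C (t (k % n))) ∣ phi n t j := by
  intro j
  induction j with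
  | zero => omega
  | succ j ih =>
    intro k hk
    rcases Nat.lt_succ_iff_lt_or_eq.mp hk with h | h
    · exact (ih k h).mul_right _
    · subst h; exact Dvd.intro_left _ rfl

lemma phi_eval_node (n : ℕ) (t : ℕ → ℝ) (j : ℕ) (hj : n ≤ j) (i : ℕ) (hi : i < n) :
    (phi n t j).eval (t i) = 0 := by
  have h := phi_dvd n t j i (lt_of_lt_of_le hi hj)
  rw [Nat.mod_eq_of_lt hi] at h
  exact dvd_iff_isRoot.mp h

lemma span_phi (n : ℕ) (t : ℕ → ℝ) (L : Polynomial ℝ → ℝ)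
    (Ladd : ∀ p q, L (p + q) = L p + L q)
    (Lsmul : ∀ (c : ℝ) (p : Polynomial ℝ), L (Polynomial.C c * p) = c * L p)
    (m : ℕ) (hphi : ∀ j ≤ m, L (phi n t j) = 0) :
    ∀ p : Polynomial ℝ, p.natDegree ≤ m → L p = 0 := by
  have Lzero : L 0 = 0 := by
    have := Lsmul 0 0; simpa using this
  suffices h : ∀ N, ∀ p : Polynomial ℝ, p.natDegree ≤ N → p.natDegree ≤ m → L p = 0 by
    intro p hp; exact h p.natDegree p le_rfl hp
  intro N
  induction N with
  | zero =>
    intro p hp0 _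
    have hpc : p = C (p.coeff 0) := eq_C_of_natDegree_le_zero hp0
    calc L p = L (C (p.coeff 0) * phi n t 0) := by
          rw [show phi n t 0 = 1 from rfl, mul_one, ← hpc]
      _ = p.coeff 0 * L (phi n t 0) := Lsmul _ _
      _ = 0 := by rw [hphi 0 (Nat.zero_le m), mul_zero]
  | succ N ih =>
    intro p hpN hpm
    by_cases h0 : p = 0
    · simp [h0, Lzero]
    by_cases hk : p.natDegree ≤ N
    · exact ih p hk hpm
    have hk' : p.natDegree = N + 1 := le_antisymm hpN (not_le.mp hk)
    set c := p.leadingCoeff with hc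
    have hc0 : c ≠ 0 := leadingCoeff_ne_zero.mpr h0
    set r := C c * phi n t p.natDegree with hr
    have hr0 : r ≠ 0 := mul_ne_zero (C_ne_zero.mpr hc0) (phi_monic n t _).ne_zero
    have hrd : r.natDegree = p.natDegree := by
      rw [hr, natDegree_C_mul hc0, phi_natDegree]
    set q := p - r with hq
    have hdeg : q.degree < p.degree := by
      apply degree_sub_lt _ h0
      · rw [hr, leadingCoeff_mul, leadingCoeff_C, (phi_monic n t _).leadingCoeff, mul_one]
      · rw [degree_eq_natDegree h0, degree_eq_natDegree hr0, hrd]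
    have hqN : q.natDegree ≤ N := by
      by_cases hq0 : q = 0
      · simp [hq0]
      · have := natDegree_lt_natDegree hq0 hdeg
        omega
    have hqm : q.natDegree ≤ m := by omega
    have hpq : p = q + r := by rw [hq]; ring
    rw [hpq, Ladd, hr, Lsmul, ih q hqN hqm, hphi p.natDegree (by omega), mul_zero, add_zero]

/-- Let `ω` be the weight vector of the interpolatory rule `Q_n` and
`d ≥ n - 1`. Then `Q_n` has degree of exactness `d` iff `μ_j = ∫_a^b q_j(t) w(t) dt = 0`
for all `n ≤ j ≤ d` and `μ_{d+1} = ∫_a^b q_{d+1}(t) w(t) dt ≠ 0` (recall `q_j = phi n t j`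
for `j ≥ n`). -/
theorem stmt3 (n : ℕ) (hn : 1 ≤ n) (t : ℕ → ℝ)
    (ht : ∀ i j : ℕ, i < j → j < n → t i < t j)
    (a b : ℝ) (hab : a < b) (w : ℝ → ℝ)
    (hw_nonneg : ∀ x ∈ Set.Ioo a b, 0 ≤ w x)
    (hw_cont : ContinuousOn w (Set.Ioo a b))
    (hw_int : ∀ p : Polynomial ℝ,
      IntervalIntegrable (fun x => p.eval x * w x) MeasureTheory.volume a b)
    (ω : Fin n → ℝ) (hω : Interpolatory n t a b w ω)
    (d : ℕ) (hd : n - 1 ≤ d) :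
    HasDegreeOfExactness n t a b w ω d ↔
      ((∀ j : ℕ, n ≤ j → j ≤ d → mu n t a b w j = 0) ∧ mu n t a b w (d + 1) ≠ 0) := by

  classical
  set L : Polynomial ℝ → ℝ :=
    fun p => Qn n t ω (fun x => p.eval x) - ∫ x in a..b, p.eval x * w x with hL
  have Ladd : ∀ p q : Polynomial ℝ, L (p + q) = L p + L q := by
    intro p q
    have hint : (∫ x in a..b, (p + q).eval x * w x)
        = (∫ x in a..b, p.eval x * w x) + ∫ x in a..b, q.eval x * w x := by
      rw [show (fun x => (p + q).eval x * w x)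
          = fun x => p.eval x * w x + q.eval x * w x from funext fun x => by
            simp [add_mul]]
      exact intervalIntegral.integral_add (hw_int p) (hw_int q)
    have hQ : Qn n t ω (fun x => (p + q).eval x)
        = Qn n t ω (fun x => p.eval x) + Qn n t ω (fun x => q.eval x) := by
      simp [Qn, mul_add, Finset.sum_add_distrib]
    simp only [hL]
    rw [hQ, hint]
    ring
  have Lsmul : ∀ (c : ℝ) (p : Polynomial ℝ), L (Polynomial.C c * p) = c * L p := by
    intro c p
    have hint : (∫ x in a..b, (C c * p).eval x * w x)
        = c * ∫ x in a..b, p.eval x * w x := by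
      rw [show (fun x => (C c * p).eval x * w x)
          = fun x => c * (p.eval x * w x) from funext fun x => by
            simp [mul_assoc]]
      exact intervalIntegral.integral_const_mul _ _
    have hQ : Qn n t ω (fun x => (C c * p).eval x) = c * Qn n t ω (fun x => p.eval x) := by
      simp only [Qn, eval_mul, eval_C, Finset.mul_sum]
      exact Finset.sum_congr rfl fun i _ => by ring
    simp only [hL, hQ, hint]
    ring
  have Lphi_lt : ∀ j, j < n → L (phi n t j) = 0 := by
    intro j hj
    have := hω (phi n t j) (by rw [phi_natDegree]; omega)
    simp [hL, this]
  have Qn_phi : ∀ j, n ≤ j → Qn n t ω (fun x => (phi n t j).eval x) = 0 := by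
    intro j hj
    apply Finset.sum_eq_zero
    intro i _
    have := phi_eval_node n t j hj i i.isLt
    simp [this]
  have Lphi_ge : ∀ j, n ≤ j → L (phi n t j) = - mu n t a b w j := by
    intro j hj
    simp [hL, Qn_phi j hj, mu]
  have key : ∀ m : ℕ, (∀ p : Polynomial ℝ, p.natDegree ≤ m →
      Qn n t ω (fun x => p.eval x) = ∫ x in a..b, p.eval x * w x) ↔
      (∀ j, n ≤ j → j ≤ m → mu n t a b w j = 0) := by
    intro m
    constructor
    · intro h j hj1 hj2
      have h1 := h (phi n t j) (by rw [phi_natDegree]; exact hj2)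
      have h2 : L (phi n t j) = 0 := by simp [hL, h1]
      rw [Lphi_ge j hj1] at h2
      linarith
    · intro h p hp
      have hz : ∀ j ≤ m, L (phi n t j) = 0 := by
        intro j hj
        rcases lt_or_ge j n with hjn | hjn
        · exact Lphi_lt j hjn
        · rw [Lphi_ge j hjn, h j hjn hj, neg_zero]
      have := span_phi n t L Ladd Lsmul m hz p hp
      simp only [hL] at this
      linarith
  constructor
  · rintro ⟨h1, p, hp, hne⟩
    have hA : ∀ j, n ≤ j → j ≤ d → mu n t a b w j = 0 := (key d).mp h1
    refine ⟨hA, ?_⟩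
    intro hmu
    apply hne
    apply (key (d + 1)).mpr _ p hp
    intro j hj1 hj2
    rcases eq_or_lt_of_le hj2 with h | h
    · rw [h]; exact hmu
    · exact hA j hj1 (Nat.lt_succ_iff.mp h)
  · rintro ⟨hA, hmu⟩
    refine ⟨(key d).mpr hA, ?_⟩
    by_contra hc
    push_neg at hc
    exact hmu (((key (d + 1)).mp hc) (d + 1) (by omega) le_rfl)
end

section
/- Let M be a real (n+1)×n matrix of rank n, b ∈ ℝ^{n+1}, and let x* ∈ ℝ^n be the least-squares solution of M x = b (the minimizer of ‖M x − b‖₂). Assume r(x*) = M x* − b ≠ 0, set σ_i = sign(r_i(x*)) (with the convention sign(0) = 1) and ε = ‖r(x*)‖₂² / ‖r(x*)‖₁. Then the linear system r_i(x) = σ_i ε, i = 1, …, n+1, has a unique solution x̂, and x̂ is a minimax solution of M x = b, i.e. x̂ minimizes ‖M x − b‖_∞ over ℝ^n. -/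
open Matrix

/-- The Euclidean (`ℓ²`) norm of a vector. -/
noncomputable def l2 {m : ℕ} (y : Fin m → ℝ) : ℝ := Real.sqrt (∑ i, (y i) ^ 2)

/-- The `ℓ^∞` norm of a vector: `‖y‖_∞ = max_i |y_i|`. -/
noncomputable def linf {m : ℕ} (y : Fin m → ℝ) : ℝ := ⨆ i, |y i|

/-- Auxiliary linear functional `y ↦ ∑ i, y i * r i`. -/
noncomputable def phiAux {m : ℕ} (r : Fin m → ℝ) : (Fin m → ℝ) →ₗ[ℝ] ℝ where
  toFun y := ∑ i, y i * r i
  map_add' a c := by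
    simp [add_mul, Finset.sum_add_distrib]
  map_smul' t a := by
    simp [Finset.mul_sum, mul_assoc]

/-- (Cheney's theorem.) Let `M` be a real `(n+1) × n` matrix of rank
`n`, `b ∈ ℝ^{n+1}`, and `x*` the least-squares solution of `M x = b`, with nonzero
residual `r(x*) = M x* - b`. Put `σ_i = sign(r_i(x*))` (with `sign 0 = 1`) and
`ε = ‖r(x*)‖₂² / ‖r(x*)‖₁`. Then the system `r_i(x) = σ_i ε`, `i = 1, …, n+1`, has a
unique solution `x̂`, and `x̂` is a minimax solution of `M x = b`, i.e. it minimizes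
`‖M x - b‖_∞` over `ℝⁿ`. -/
theorem stmt9 (n : ℕ) (M : Matrix (Fin (n + 1)) (Fin n) ℝ) (hM : M.rank = n)
    (b : Fin (n + 1) → ℝ) (xstar : Fin n → ℝ)
    (hx : ∀ y : Fin n → ℝ, l2 (M.mulVec xstar - b) ≤ l2 (M.mulVec y - b))
    (hr : M.mulVec xstar - b ≠ 0)
    (σ : Fin (n + 1) → ℝ)
    (hσ : ∀ i, σ i = if 0 ≤ (M.mulVec xstar - b) i then 1 else -1)
    (ε : ℝ)
    (hε : ε = (∑ i, ((M.mulVec xstar - b) i) ^ 2) / (∑ i, |(M.mulVec xstar - b) i|)) :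
    (∃! xhat : Fin n → ℝ, M.mulVec xhat - b = fun i => σ i * ε) ∧
    ∀ xhat : Fin n → ℝ, (M.mulVec xhat - b = fun i => σ i * ε) →
      ∀ y : Fin n → ℝ, linf (M.mulVec xhat - b) ≤ linf (M.mulVec y - b) := by
  set r : Fin (n + 1) → ℝ := M.mulVec xstar - b with hrdef
  have hrc : ∀ i, r i = (M.mulVec xstar) i - b i := fun i => rfl
  -- positivity of the two norms of r
  have S2pos : 0 < ∑ i, r i ^ 2 := by
    obtain ⟨j, hj⟩ : ∃ j, r j ≠ 0 := by
      by_contra h; push_neg at h; exact hr (funext h)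
    exact Finset.sum_pos' (fun i _ => sq_nonneg _)
      ⟨j, Finset.mem_univ _, by positivity⟩
  have hσr : ∀ i, σ i * r i = |r i| := by
    intro i
    rw [hσ i]
    rcases le_or_gt 0 (r i) with h | h
    · rw [if_pos h, abs_of_nonneg h, one_mul]
    · rw [if_neg (not_le.mpr h), abs_of_neg h]; ring
  have S1pos : 0 < ∑ i, |r i| := by
    obtain ⟨j, hj⟩ : ∃ j, r j ≠ 0 := by
      by_contra h; push_neg at h; exact hr (funext h)
    exact Finset.sum_pos' (fun i _ => abs_nonneg _)
      ⟨j, Finset.mem_univ _, abs_pos.mpr hj⟩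
  have hεpos : 0 < ε := by
    rw [hε]; exact div_pos S2pos S1pos
  have hεS1 : ε * ∑ i, |r i| = ∑ i, r i ^ 2 := by
    rw [hε]; field_simp
  -- orthogonality: r is orthogonal to the column space of M
  have orth : ∀ v : Fin n → ℝ, ∑ i, (M.mulVec v) i * r i = 0 := by
    intro v
    set c := ∑ i, (M.mulVec v) i * r i with hc
    set d := ∑ i, (M.mulVec v i) ^ 2 with hd
    have hd0 : 0 ≤ d := Finset.sum_nonneg fun i _ => sq_nonneg _
    have key : ∀ t : ℝ, 0 ≤ 2 * t * c + t ^ 2 * d := by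
      intro t
      have h1 := hx (xstar + t • v)
      unfold l2 at h1
      have e1 : ∀ i, (M.mulVec (xstar + t • v) - b) i = r i + t * (M.mulVec v) i := by
        intro i
        have : M.mulVec (xstar + t • v) = M.mulVec xstar + t • M.mulVec v := by
          rw [Matrix.mulVec_add, Matrix.mulVec_smul]
        rw [Pi.sub_apply, this, Pi.add_apply, Pi.smul_apply, hrc i, smul_eq_mul]
        ring
      have hB : (0:ℝ) ≤ ∑ i, (M.mulVec (xstar + t • v) - b) i ^ 2 :=
        Finset.sum_nonneg fun i _ => sq_nonneg _
      have h2 : ∑ i, r i ^ 2 ≤ ∑ i, (M.mulVec (xstar + t • v) - b) i ^ 2 := by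
        calc ∑ i, r i ^ 2 = Real.sqrt (∑ i, r i ^ 2) ^ 2 :=
              (Real.sq_sqrt (le_of_lt S2pos)).symm
          _ ≤ Real.sqrt (∑ i, (M.mulVec (xstar + t • v) - b) i ^ 2) ^ 2 :=
              pow_le_pow_left₀ (Real.sqrt_nonneg _) h1 2
          _ = ∑ i, (M.mulVec (xstar + t • v) - b) i ^ 2 := Real.sq_sqrt hB
      have h3 : ∑ i, (M.mulVec (xstar + t • v) - b) i ^ 2
          = (∑ i, r i ^ 2) + (2 * t * c + t ^ 2 * d) := by
        rw [hc, hd, Finset.mul_sum, Finset.mul_sum, ← Finset.sum_add_distrib,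
          ← Finset.sum_add_distrib]
        refine Finset.sum_congr rfl fun i _ => ?_
        rw [e1 i]; ring
      rw [h3] at h2
      linarith
    have hdp : (0:ℝ) < d + 1 := by linarith
    have ht := key (-c / (d + 1))
    have h4 : 0 ≤ (2 * (-c / (d + 1)) * c + (-c / (d + 1)) ^ 2 * d) * (d + 1) ^ 2 :=
      mul_nonneg ht (by positivity)
    have h5 : (2 * (-c / (d + 1)) * c + (-c / (d + 1)) ^ 2 * d) * (d + 1) ^ 2
        = -c ^ 2 * (d + 2) := by
      field_simp
      ring
    rw [h5] at h4
    nlinarith [sq_nonneg c]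
  -- range of M = kernel of the functional ⟨·, r⟩
  have hle : LinearMap.range M.mulVecLin ≤ LinearMap.ker (phiAux r) := by
    rintro y ⟨x, rfl⟩
    simpa [phiAux, Matrix.mulVecLin_apply] using orth x
  have hrange_phi : LinearMap.range (phiAux r) = ⊤ := by
    rw [LinearMap.range_eq_top]
    intro a
    refine ⟨(a / ∑ i, r i ^ 2) • r, ?_⟩
    have : ∑ i, ((a / ∑ j, r j ^ 2) * r i) * r i
        = (a / ∑ j, r j ^ 2) * ∑ i, r i ^ 2 := by
      rw [Finset.mul_sum]
      refine Finset.sum_congr rfl fun i _ => by ring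
    simp only [phiAux, LinearMap.coe_mk, AddHom.coe_mk, Pi.smul_apply, smul_eq_mul]
    rw [this, div_mul_cancel₀ _ (ne_of_gt S2pos)]
  have hrank : Module.finrank ℝ ↥(LinearMap.range M.mulVecLin) = n := hM
  have hkerphi : Module.finrank ℝ ↥(LinearMap.ker (phiAux r)) = n := by
    have h1 := LinearMap.finrank_range_add_finrank_ker (phiAux r)
    rw [hrange_phi, finrank_top, Module.finrank_self, Module.finrank_fin_fun] at h1
    omega
  have hker_range : LinearMap.range M.mulVecLin = LinearMap.ker (phiAux r) :=
    Submodule.eq_of_le_of_finrank_le hle (by rw [hrank, hkerphi])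
  -- injectivity of mulVec
  have hinj : Function.Injective M.mulVecLin := by
    rw [← LinearMap.ker_eq_bot]
    have h2 := LinearMap.finrank_range_add_finrank_ker M.mulVecLin
    rw [hrank, Module.finrank_fin_fun] at h2
    exact Submodule.finrank_eq_zero.mp (by omega)
  -- existence of xhat
  have hmem : ((fun i => σ i * ε) - r) ∈ LinearMap.ker (phiAux r) := by
    rw [LinearMap.mem_ker]
    simp only [phiAux, LinearMap.coe_mk, AddHom.coe_mk, Pi.sub_apply]
    have : ∑ i, (σ i * ε - r i) * r i = ε * (∑ i, |r i|) - ∑ i, r i ^ 2 := by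
      rw [Finset.mul_sum, ← Finset.sum_sub_distrib]
      refine Finset.sum_congr rfl fun i _ => ?_
      rw [← hσr i]; ring
    rw [this, hεS1, sub_self]
  rw [← hker_range] at hmem
  obtain ⟨w, hw⟩ := hmem
  rw [Matrix.mulVecLin_apply] at hw
  have hex : M.mulVec (xstar + w) - b = fun i => σ i * ε := by
    funext i
    have := congrFun hw i
    rw [Pi.sub_apply] at this
    rw [Pi.sub_apply, Matrix.mulVec_add, Pi.add_apply]
    rw [this, hrc i]
    ring
  constructor
  · refine ⟨xstar + w, hex, ?_⟩
    intro y hy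
    apply hinj
    rw [Matrix.mulVecLin_apply, Matrix.mulVecLin_apply]
    have h1 : M.mulVec y = (fun i => σ i * ε) + b := by
      rw [← hy]; funext i; simp
    have h2 : M.mulVec (xstar + w) = (fun i => σ i * ε) + b := by
      rw [← hex]; funext i; simp
    rw [h1, h2]
  · intro xhat hxhat y
    have hbdd : ∀ (z : Fin (n + 1) → ℝ), BddAbove (Set.range fun i => |z i|) :=
      fun z => (Set.finite_range _).bddAbove
    -- |σ i| = 1
    have hσ1 : ∀ i, |σ i| = 1 := by
      intro i
      rw [hσ i]
      split <;> simp
    -- linf of xhat's residual is ε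
    have hlxhat : linf (M.mulVec xhat - b) = ε := by
      unfold linf
      have : (fun i => |(M.mulVec xhat - b) i|) = fun _ => ε := by
        funext i
        rw [hxhat, abs_mul, hσ1 i, one_mul, abs_of_pos hεpos]
      rw [this]
      exact ciSup_const
    -- lower bound for any residual
    have hS2eq : ∑ i, (M.mulVec y - b) i * r i = ∑ i, r i ^ 2 := by
      have e : ∀ i, (M.mulVec y - b) i = (M.mulVec (y - xstar)) i + r i := by
        intro i
        simp only [Matrix.mulVec_sub, Pi.sub_apply, hrc i]
        ring
      calc ∑ i, (M.mulVec y - b) i * r i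
          = ∑ i, ((M.mulVec (y - xstar)) i * r i + r i ^ 2) := by
            refine Finset.sum_congr rfl fun i _ => ?_
            rw [e i]; ring
        _ = (∑ i, (M.mulVec (y - xstar)) i * r i) + ∑ i, r i ^ 2 :=
            Finset.sum_add_distrib
        _ = ∑ i, r i ^ 2 := by rw [orth (y - xstar), zero_add]
    have hbound : ∑ i, r i ^ 2 ≤ linf (M.mulVec y - b) * ∑ i, |r i| := by
      rw [← hS2eq, Finset.mul_sum]
      refine Finset.sum_le_sum fun i _ => ?_
      calc (M.mulVec y - b) i * r i ≤ |(M.mulVec y - b) i * r i| := le_abs_self _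
        _ = |(M.mulVec y - b) i| * |r i| := abs_mul _ _
        _ ≤ linf (M.mulVec y - b) * |r i| := by
            refine mul_le_mul_of_nonneg_right ?_ (abs_nonneg _)
            exact le_ciSup (hbdd _) i
    rw [hlxhat, hε]
    rw [div_le_iff₀ S1pos]
    exact hbound
end
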